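/- Let P = (P, ≤_P) be a partial order, let φ be a parsimonious set representation of P, and suppose p₀, p₁ ∈ P are distinct elements with α_φ(p₀) = α_φ(p₁). For i ∈ {0,1} let I_i be the set of all p <_P p_i that are ≤_P-incomparable with p_{1−i}. Then I₀ ∪ {p₀} and I₁ ∪ {p₁} are parallel bouquets in P (with respective maxima p₀ and p₁) that are not skewly topped. -/

import Mathlib

/-!
If `α_φ p₀ = α_φ p₁`, the two elements are incomparable. Every element of `φ p₁` is `α_φ p'`
for some `p' ≤ p₁`, and such a `p'` is `p₁` itself (whose label is also `α_φ p₀`), lies below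
`p₀`, or lies in `I₁`. So any `m` above `p₀` and above `I₁` has `φ p₁ ⊆ φ m`, i.e. `p₁ ≤ m`:
no skew top exists, and with the roles swapped and `m = p₁` this shows that `I₀` is nonempty.
-/

namespace SatOrder

variable {α Q : Type}

/-- A set representation of a partial order: an injective map into sets such that
`p < p'` iff `φ p ⊊ φ p'`. -/
def IsSetRep [PartialOrder α] (φ : α → Set Q) : Prop :=
  Function.Injective φ ∧ ∀ p p' : α, p < p' ↔ φ p ⊂ φ p'

/-- The residual set `φ p − ⋃_{p' < p} φ p'`. -/
def resid [PartialOrder α] (φ : α → Set Q) (p : α) : Set Q :=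
  φ p \ ⋃ p' ∈ {x : α | x < p}, φ p'

/-- A parsimonious set representation: every residual is a singleton, and every element of `φ p`
is the residual element of some `p' ≤ p`. -/
def IsParsimonious [PartialOrder α] (φ : α → Set Q) : Prop :=
  IsSetRep φ ∧ (∀ p : α, ∃ q : Q, resid φ p = {q}) ∧
    (∀ p : α, ∀ q ∈ φ p, ∃ p' : α, p' ≤ p ∧ resid φ p' = {q})

/-- `a` is the map `α_φ`, i.e. `{a p} = φ p − ⋃_{p' < p} φ p'` for all `p`. -/
def IsAlpha [PartialOrder α] (φ : α → Set Q) (a : α → Q) : Prop :=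
  ∀ p : α, resid φ p = {a p}

/-- A partial order is saturated if `α_φ` is injective for every parsimonious
set representation `φ`. -/
def IsSaturated (α : Type) [PartialOrder α] : Prop :=
  ∀ (Q : Type) (φ : α → Set Q), IsParsimonious φ →
    ∀ a : α → Q, IsAlpha φ a → Function.Injective a

/-- A bouquet with maximum `m`: a set with at least two elements whose maximum is `m`. -/
def IsBouquet [PartialOrder α] (B : Set α) (m : α) : Prop :=
  B.Nontrivial ∧ m ∈ B ∧ ∀ b ∈ B, b ≤ m

/-- A fan: a bouquet such that no two distinct elements of `F − {max F}` are comparable. -/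
def IsFan [PartialOrder α] (F : Set α) (m : α) : Prop :=
  IsBouquet F m ∧ ∀ b ∈ F \ {m}, ∀ b' ∈ F \ {m}, b ≤ b' → b = b'

/-- Two sets are parallel if no element of one is comparable with any element of the other. -/
def ParallelB [PartialOrder α] (B₀ B₁ : Set α) : Prop :=
  ∀ b₀ ∈ B₀, ∀ b₁ ∈ B₁, ¬ b₀ ≤ b₁ ∧ ¬ b₁ ≤ b₀

/-- `m` skewly tops `B₀, B₁` (with maxima `m₀, m₁`). -/
def SkewlyTops [PartialOrder α] (m : α) (B₀ B₁ : Set α) (m₀ m₁ : α) : Prop :=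
  (m₀ ≤ m ∧ ¬ m₁ ≤ m ∧ ∀ p ∈ B₁ \ {m₁}, p ≤ m) ∨
  (m₁ ≤ m ∧ ¬ m₀ ≤ m ∧ ∀ p ∈ B₀ \ {m₀}, p ≤ m)

/-- `B₀` and `B₁` (with maxima `m₀, m₁`) are skewly topped. -/
def SkewlyTopped [PartialOrder α] (B₀ B₁ : Set α) (m₀ m₁ : α) : Prop :=
  ∃ m : α, SkewlyTops m B₀ B₁ m₀ m₁

section Representation

variable [PartialOrder α] {φ : α → Set Q} {a : α → Q}

theorem IsSetRep.le_iff_subset (hφ : IsSetRep φ) {p p' : α} : p ≤ p' ↔ φ p ⊆ φ p' := by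
  rw [le_iff_eq_or_lt, hφ.2, ← hφ.1.eq_iff]
  exact le_iff_eq_or_lt.symm

theorem IsAlpha.mem_resid (ha : IsAlpha φ a) (p : α) : a p ∈ resid φ p :=
  (ha p).symm ▸ Set.mem_singleton _

theorem IsAlpha.mem (ha : IsAlpha φ a) (p : α) : a p ∈ φ p :=
  (ha.mem_resid p).1

theorem IsAlpha.notMem_of_lt (ha : IsAlpha φ a) {p p' : α} (h : p' < p) : a p ∉ φ p' :=
  fun hmem ↦ (ha.mem_resid p).2 (Set.mem_biUnion h hmem)

theorem IsAlpha.not_le_of_eq (ha : IsAlpha φ a) {p₀ p₁ : α} (hne : p₀ ≠ p₁)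
    (heq : a p₀ = a p₁) : ¬ p₀ ≤ p₁ :=
  fun hle ↦ ha.notMem_of_lt (hle.lt_of_ne hne) (heq ▸ ha.mem p₀)

end Representation

/-- `I_i` of the statement is `incompBelow p_i p_{1-i}`. -/
def incompBelow [PartialOrder α] (p q : α) : Set α :=
  {x | x < p ∧ ¬ x ≤ q ∧ ¬ q ≤ x}

section Bouquets

variable [PartialOrder α] {p q x : α}

theorem le_of_mem_incompBelow_union (hx : x ∈ incompBelow p q ∪ {p}) : x ≤ p := by
  rcases hx with hx | rfl
  · exact hx.1.le
  · exact le_rfl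

theorem incomparable_of_mem_incompBelow_union (hpq : ¬ p ≤ q) (hqp : ¬ q ≤ p)
    (hx : x ∈ incompBelow p q ∪ {p}) : ¬ x ≤ q ∧ ¬ q ≤ x := by
  rcases hx with hx | rfl
  · exact hx.2
  · exact ⟨hpq, hqp⟩

theorem isBouquet_incompBelow_union (hI : (incompBelow p q).Nonempty) :
    IsBouquet (incompBelow p q ∪ {p}) p := by
  obtain ⟨w, hw⟩ := hI
  exact ⟨⟨w, .inl hw, p, .inr rfl, hw.1.ne⟩, .inr rfl, fun _ ↦ le_of_mem_incompBelow_union⟩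

theorem incompBelow_union_sdiff (p q : α) :
    (incompBelow p q ∪ {p}) \ {p} = incompBelow p q := by
  rw [Set.union_sdiff_right, Set.sdiff_singleton_eq_self fun h ↦ h.1.ne rfl]

theorem parallelB_incompBelow_union (hpq : ¬ p ≤ q) (hqp : ¬ q ≤ p) :
    ParallelB (incompBelow p q ∪ {p}) (incompBelow q p ∪ {q}) := by
  intro x hx y hy
  have hxq := incomparable_of_mem_incompBelow_union hpq hqp hx
  have hyp := incomparable_of_mem_incompBelow_union hqp hpq hy
  exact ⟨fun hxy ↦ hxq.1 (hxy.trans (le_of_mem_incompBelow_union hy)),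
    fun hyx ↦ hyp.1 (hyx.trans (le_of_mem_incompBelow_union hx))⟩

end Bouquets

section Parsimonious

variable [PartialOrder α] {φ : α → Set Q} {a : α → Q}

theorem IsParsimonious.le_of_forall_incompBelow_le (hφ : IsParsimonious φ) (ha : IsAlpha φ a)
    {p₀ p₁ m : α} (heq : a p₀ = a p₁) (h₀₁ : ¬ p₀ ≤ p₁) (hp₀m : p₀ ≤ m)
    (hI : ∀ p ∈ incompBelow p₁ p₀, p ≤ m) : p₁ ≤ m := by
  rw [hφ.1.le_iff_subset]
  intro x hx
  obtain ⟨p, hpp₁, hres⟩ := hφ.2.2 p₁ x hx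
  have hxp : x = a p := Set.singleton_eq_singleton_iff.mp (hres.symm.trans (ha p))
  subst hxp
  rcases hpp₁.eq_or_lt with rfl | hlt
  · exact hφ.1.le_iff_subset.mp hp₀m (heq ▸ ha.mem p₀)
  by_cases hpp₀ : p ≤ p₀
  · exact hφ.1.le_iff_subset.mp (hpp₀.trans hp₀m) (ha.mem p)
  have hp₀p : ¬ p₀ ≤ p := fun h ↦ h₀₁ (h.trans hlt.le)
  exact hφ.1.le_iff_subset.mp (hI p ⟨hlt, hpp₀, hp₀p⟩) (ha.mem p)

theorem IsParsimonious.incompBelow_nonempty (hφ : IsParsimonious φ) (ha : IsAlpha φ a)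
    {p₀ p₁ : α} (heq : a p₀ = a p₁) (h₀₁ : ¬ p₀ ≤ p₁) (h₁₀ : ¬ p₁ ≤ p₀) :
    (incompBelow p₀ p₁).Nonempty := by
  by_contra hI
  refine h₀₁ (hφ.le_of_forall_incompBelow_le ha heq.symm h₁₀ le_rfl fun p hp ↦ ?_)
  exact absurd ⟨p, hp⟩ hI

theorem IsParsimonious.not_skewlyTops_of_alpha_eq (hφ : IsParsimonious φ) (ha : IsAlpha φ a)
    {p₀ p₁ : α} (heq : a p₀ = a p₁) (h₀₁ : ¬ p₀ ≤ p₁) (h₁₀ : ¬ p₁ ≤ p₀) (m : α) :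
    ¬ SkewlyTops m (incompBelow p₀ p₁ ∪ {p₀}) (incompBelow p₁ p₀ ∪ {p₁}) p₀ p₁ := by
  simp only [SkewlyTops, incompBelow_union_sdiff]
  rintro (⟨hp₀m, hp₁m, hI⟩ | ⟨hp₁m, hp₀m, hI⟩)
  · exact hp₁m (hφ.le_of_forall_incompBelow_le ha heq h₀₁ hp₀m hI)
  · exact hp₀m (hφ.le_of_forall_incompBelow_le ha heq.symm h₁₀ hp₁m hI)

end Parsimonious

/-- If `φ` is parsimonious and `p₀ ≠ p₁` with `α_φ p₀ = α_φ p₁`, then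
`I₀ ∪ {p₀}` and `I₁ ∪ {p₁}` are parallel bouquets (with maxima `p₀, p₁`) that are not
skewly topped, where `I_i` consists of the `p < p_i` incomparable with `p_{1-i}`. -/
theorem parallel_bouquets_not_topped_of_alpha_eq {α Q : Type} [PartialOrder α]
    (φ : α → Set Q) (hφ : IsParsimonious φ) (a : α → Q) (ha : IsAlpha φ a)
    (p₀ p₁ : α) (hne : p₀ ≠ p₁) (heq : a p₀ = a p₁) :
    letI I₀ : Set α := {p : α | p < p₀ ∧ ¬ p ≤ p₁ ∧ ¬ p₁ ≤ p}
    letI I₁ : Set α := {p : α | p < p₁ ∧ ¬ p ≤ p₀ ∧ ¬ p₀ ≤ p}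
    IsBouquet (I₀ ∪ {p₀}) p₀ ∧ IsBouquet (I₁ ∪ {p₁}) p₁ ∧
      ParallelB (I₀ ∪ {p₀}) (I₁ ∪ {p₁}) ∧
      ¬ SkewlyTopped (I₀ ∪ {p₀}) (I₁ ∪ {p₁}) p₀ p₁ := by
  have h₀₁ : ¬ p₀ ≤ p₁ := ha.not_le_of_eq hne heq
  have h₁₀ : ¬ p₁ ≤ p₀ := ha.not_le_of_eq hne.symm heq.symm
  show IsBouquet (incompBelow p₀ p₁ ∪ {p₀}) p₀ ∧ IsBouquet (incompBelow p₁ p₀ ∪ {p₁}) p₁ ∧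
    ParallelB (incompBelow p₀ p₁ ∪ {p₀}) (incompBelow p₁ p₀ ∪ {p₁}) ∧
    ¬ SkewlyTopped (incompBelow p₀ p₁ ∪ {p₀}) (incompBelow p₁ p₀ ∪ {p₁}) p₀ p₁
  exact ⟨isBouquet_incompBelow_union (hφ.incompBelow_nonempty ha heq h₀₁ h₁₀),
    isBouquet_incompBelow_union (hφ.incompBelow_nonempty ha heq.symm h₁₀ h₀₁),
    parallelB_incompBelow_union h₀₁ h₁₀,
    fun ⟨m, hm⟩ ↦ hφ.not_skewlyTops_of_alpha_eq ha heq h₀₁ h₁₀ m hm⟩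

end SatOrder
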